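/- Let n be a positive integer, x = (x_1,...,x_n) and y = (y_1,...,y_n) be n-tuples of complex numbers, p = (p_1,...,p_n) nonnegative real weights with ∑_{i=1}^n p_i = 1, and γ, Γ ∈ ℂ with Re(Γ · conj(γ)) > 0. If ∑_{i=1}^n p_i | x_i - ((γ + Γ)/2) · conj(y_i) |^2 ≤ (1/4) |Γ - γ|^2 ∑_{i=1}^n p_i |y_i|^2, then (∑_{i=1}^n p_i |x_i|^2)(∑_{i=1}^n p_i |y_i|^2) ≤ (1/4) · ( Re[ (conj(Γ) + conj(γ)) ∑_{i=1}^n p_i x_i y_i ] )^2 / Re(Γ conj(γ)) ≤ (1/4) · (|Γ + γ|^2 / Re(Γ conj(γ))) · | ∑_{i=1}^n p_i x_i y_i |^2. -/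

import Mathlib

/-!
With `c = (γ + Γ)/2`, expanding the square gives
`∑ pᵢ |xᵢ - c ȳᵢ|² = A + |c|² B - Re((Γ̄ + γ̄) S)`, where `A = ∑ pᵢ |xᵢ|²`, `B = ∑ pᵢ |yᵢ|²`,
`S = ∑ pᵢ xᵢ yᵢ`, and `|c|² = Re(Γ γ̄) + |Γ - γ|²/4`. So the hypothesis says exactly
`A + Re(Γ γ̄) B ≤ Re((Γ̄ + γ̄) S)`, and AM-GM `4 Re(Γ γ̄) A B ≤ (A + Re(Γ γ̄) B)²` gives the first
bound; the second is `|Re w| ≤ |w|`.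
-/

open ComplexConjugate

namespace Complex

lemma sq_norm_sub_mul_conj (x y c : ℂ) :
    ‖x - c * conj y‖ ^ 2 = ‖x‖ ^ 2 + ‖c‖ ^ 2 * ‖y‖ ^ 2 - 2 * (conj c * (x * y)).re := by
  have hre : (x * conj (c * conj y)).re = (conj c * (x * y)).re := by
    rw [map_mul, conj_conj]; ring_nf
  simp only [Complex.sq_norm, normSq_sub, hre, normSq_mul, normSq_conj]

lemma sq_norm_add_div_two (γ Γ : ℂ) :
    ‖(γ + Γ) / 2‖ ^ 2 = (Γ * conj γ).re + ‖Γ - γ‖ ^ 2 / 4 := by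
  simp only [Complex.sq_norm, normSq_apply, div_re, div_im, add_re, add_im, mul_re,
    conj_re, conj_im]
  norm_num
  ring

lemma sum_mul_sq_norm_sub_mul_conj {ι : Type*} [Fintype ι] (p : ι → ℝ) (x y : ι → ℂ) (c : ℂ) :
    ∑ i, p i * ‖x i - c * conj (y i)‖ ^ 2
      = ∑ i, p i * ‖x i‖ ^ 2 + ‖c‖ ^ 2 * ∑ i, p i * ‖y i‖ ^ 2
        - 2 * (conj c * ∑ i, (p i : ℂ) * x i * y i).re := by
  simp only [Finset.mul_sum, re_sum, ← Finset.sum_add_distrib, ← Finset.sum_sub_distrib]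
  refine Finset.sum_congr rfl fun i _ => ?_
  have hre : (conj c * ((p i : ℂ) * x i * y i)).re = p i * (conj c * (x i * y i)).re := by
    rw [← re_ofReal_mul]; ring_nf
  rw [sq_norm_sub_mul_conj, hre]
  ring

end Complex

lemma mul_le_sq_div_of_add_mul_le {A B r T : ℝ} (hr : 0 < r) (h₀ : 0 ≤ A + r * B)
    (h : A + r * B ≤ T) : A * B ≤ T ^ 2 / (4 * r) := by
  rw [le_div_iff₀ (by positivity)]
  calc A * B * (4 * r) = 4 * A * (r * B) := by ring
    _ ≤ (A + r * B) ^ 2 := four_mul_le_sq_add _ _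
    _ ≤ T ^ 2 := pow_le_pow_left₀ h₀ h 2

theorem stmt_15_general (n : ℕ) (x y : Fin n → ℂ) (p : Fin n → ℝ)
    (hp : ∀ k, 0 ≤ p k)
    (γ Γ : ℂ) (hΓγ : 0 < (Γ * (starRingEnd ℂ) γ).re)
    (h : ∑ i, p i * ‖x i - ((γ + Γ) / 2) * (starRingEnd ℂ) (y i)‖ ^ 2
        ≤ (1 / 4) * ‖Γ - γ‖ ^ 2 * ∑ i, p i * ‖y i‖ ^ 2) :
    (∑ i, p i * ‖x i‖ ^ 2) * (∑ i, p i * ‖y i‖ ^ 2)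
      ≤ (1 / 4) * ((((starRingEnd ℂ) Γ + (starRingEnd ℂ) γ) * ∑ i, (p i : ℂ) * x i * y i).re ^ 2
          / (Γ * (starRingEnd ℂ) γ).re)
    ∧ (1 / 4) * ((((starRingEnd ℂ) Γ + (starRingEnd ℂ) γ) * ∑ i, (p i : ℂ) * x i * y i).re ^ 2
          / (Γ * (starRingEnd ℂ) γ).re)
      ≤ (1 / 4) * (‖Γ + γ‖ ^ 2 / (Γ * (starRingEnd ℂ) γ).re)
        * ‖∑ i, (p i : ℂ) * x i * y i‖ ^ 2 := by
  set A := ∑ i, p i * ‖x i‖ ^ 2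
  set B := ∑ i, p i * ‖y i‖ ^ 2
  set S := ∑ i, (p i : ℂ) * x i * y i
  set r := (Γ * conj γ).re
  set T := ((conj Γ + conj γ) * S).re
  have hA : 0 ≤ A := Finset.sum_nonneg fun i _ => mul_nonneg (hp i) (sq_nonneg _)
  have hB : 0 ≤ B := Finset.sum_nonneg fun i _ => mul_nonneg (hp i) (sq_nonneg _)
  have hT : T = 2 * (conj ((γ + Γ) / 2) * S).re := by
    show ((conj Γ + conj γ) * S).re = _
    rw [← Complex.re_ofReal_mul, map_div₀, map_add, map_ofNat]; push_cast; ring_nf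
  have key : A + r * B ≤ T := by
    rw [Complex.sum_mul_sq_norm_sub_mul_conj, Complex.sq_norm_add_div_two, ← hT] at h
    linarith
  have hTS : T ^ 2 ≤ ‖Γ + γ‖ ^ 2 * ‖S‖ ^ 2 := by
    show ((conj Γ + conj γ) * S).re ^ 2 ≤ _
    rw [← mul_pow, ← map_add, ← Complex.norm_conj (Γ + γ), ← norm_mul, ← sq_abs]
    exact pow_le_pow_left₀ (abs_nonneg _) (Complex.abs_re_le_norm _) 2
  constructor
  · calc A * B ≤ T ^ 2 / (4 * r) :=
          mul_le_sq_div_of_add_mul_le hΓγ (add_nonneg hA (mul_nonneg hΓγ.le hB)) key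
      _ = _ := by ring
  · calc _ ≤ 1 / 4 * (‖Γ + γ‖ ^ 2 * ‖S‖ ^ 2 / r) := by gcongr
      _ = _ := by ring

theorem stmt_15 (n : ℕ) (hn : 0 < n) (x y : Fin n → ℂ) (p : Fin n → ℝ)
    (hp : ∀ k, 0 ≤ p k) (hp1 : ∑ i, p i = 1)
    (γ Γ : ℂ) (hΓγ : 0 < (Γ * (starRingEnd ℂ) γ).re)
    (h : ∑ i, p i * ‖x i - ((γ + Γ) / 2) * (starRingEnd ℂ) (y i)‖ ^ 2
        ≤ (1 / 4) * ‖Γ - γ‖ ^ 2 * ∑ i, p i * ‖y i‖ ^ 2) :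
    (∑ i, p i * ‖x i‖ ^ 2) * (∑ i, p i * ‖y i‖ ^ 2)
      ≤ (1 / 4) * ((((starRingEnd ℂ) Γ + (starRingEnd ℂ) γ) * ∑ i, (p i : ℂ) * x i * y i).re ^ 2
          / (Γ * (starRingEnd ℂ) γ).re)
    ∧ (1 / 4) * ((((starRingEnd ℂ) Γ + (starRingEnd ℂ) γ) * ∑ i, (p i : ℂ) * x i * y i).re ^ 2
          / (Γ * (starRingEnd ℂ) γ).re)
      ≤ (1 / 4) * (‖Γ + γ‖ ^ 2 / (Γ * (starRingEnd ℂ) γ).re)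
        * ‖∑ i, (p i : ℂ) * x i * y i‖ ^ 2 :=
  stmt_15_general n x y p hp γ Γ hΓγ h
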